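/- Let A be a separable C*-algebra admitting a faithful locally finite dimensional (LFD) tracial state (faithful meaning τ(a*a) = 0 implies a = 0). Then A is inner quasidiagonal: there exists a sequence of c.c.p. maps φ_n : A → M_{k(n)} such that ‖φ_n(a)‖ → ‖a‖ and dist(a, A_{φ_n}) → 0 for every a ∈ A. -/

import Mathlib

open scoped ComplexOrder ENNReal
open Filter Metric Topology

set_option synthInstance.maxHeartbeats 400000
set_option maxHeartbeats 1000000

noncomputable section

/-- The C*-algebra `M_k` of `k × k` complex matrices, realized as the bounded operators
on the `k`-dimensional complex Hilbert space. -/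
abbrev MatAlg (k : ℕ) : Type := EuclideanSpace ℂ (Fin k) →L[ℂ] EuclideanSpace ℂ (Fin k)

variable {A : Type*} [NonUnitalCStarAlgebra A]

/-- A linear map `φ : A → B(H)` is completely positive if, for every `n`, every `a : Fin n → A`
and every `v : Fin n → H`, the positivity condition `0 ≤ ∑ᵢⱼ ⟪vᵢ, φ(aᵢ* aⱼ) vⱼ⟫` holds; this is
the standard characterization saying that the matrix `(φ (aᵢ* aⱼ))ᵢⱼ` is a positive operator
matrix, and (since every positive matrix over `A` is a sum of matrices `(aᵢ* aⱼ)ᵢⱼ`) it is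
equivalent to positivity of all the matrix amplifications of `φ`. -/
def IsCompletelyPositive {H : Type*} [NormedAddCommGroup H] [InnerProductSpace ℂ H]
    (φ : A →ₗ[ℂ] (H →L[ℂ] H)) : Prop :=
  ∀ (n : ℕ) (a : Fin n → A) (v : Fin n → H),
    0 ≤ ∑ i, ∑ j, (inner ℂ (v i) (φ (star (a i) * a j) (v j)) : ℂ)

/-- A contractive completely positive (c.c.p.) map. -/
def IsCCP {H : Type*} [NormedAddCommGroup H] [InnerProductSpace ℂ H]
    (φ : A →ₗ[ℂ] (H →L[ℂ] H)) : Prop :=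
  IsCompletelyPositive φ ∧ ∀ a : A, ‖φ a‖ ≤ ‖a‖

/-- The multiplicative domain `A_φ` of a map `φ`. -/
def MultDomain {H : Type*} [NormedAddCommGroup H] [InnerProductSpace ℂ H]
    (φ : A →ₗ[ℂ] (H →L[ℂ] H)) : Set A :=
  {a : A | ∀ b : A, φ (a * b) = φ a * φ b ∧ φ (b * a) = φ b * φ a}

/-- The normalized trace `tr_k = Tr / k` on `M_k`. -/
def normTr {k : ℕ} (T : MatAlg k) : ℂ :=
  (LinearMap.trace ℂ (EuclideanSpace ℂ (Fin k)) T.toLinearMap) / k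

/-- A tracial state: a positive linear functional of norm one with the trace property. -/
def IsTracialState (τ : A →L[ℂ] ℂ) : Prop :=
  ‖τ‖ = 1 ∧ (∀ a : A, 0 ≤ τ (star a * a)) ∧ ∀ a b : A, τ (a * b) = τ (b * a)

/-- A trace `τ` is locally finite dimensional (LFD) if there is a sequence of c.c.p. maps
`φ n : A → M_{k n}` such that `dist (a, A_{φ n}) → 0` and `tr_{k n} (φ n a) → τ a` for all
`a ∈ A`. -/
def IsLFDTrace (τ : A →L[ℂ] ℂ) : Prop :=
  ∃ (k : ℕ → ℕ) (φ : ∀ n : ℕ, A →ₗ[ℂ] MatAlg (k n)),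
    (∀ n, 0 < k n) ∧ (∀ n, IsCCP (φ n)) ∧
    (∀ a : A, Tendsto (fun n => infDist a (MultDomain (φ n))) atTop (𝓝 0)) ∧
    (∀ a : A, Tendsto (fun n => normTr (φ n a)) atTop (𝓝 (τ a)))

/-- A representation of `A` on a complex Hilbert space, bundled with its space. -/
structure HilbertRep (A : Type*) [NonUnitalCStarAlgebra A] where
  /-- the underlying Hilbert space -/
  H : Type
  [instNACG : NormedAddCommGroup H]
  [instIPS : InnerProductSpace ℂ H]
  [instCS : CompleteSpace H]
  /-- the star homomorphism `A → B(H)` -/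
  ρ : A →⋆ₙₐ[ℂ] (H →L[ℂ] H)

attribute [instance] HilbertRep.instNACG HilbertRep.instIPS HilbertRep.instCS

/-- Irreducibility of a representation: the only closed invariant subspaces are `⊥` and `⊤`. -/
def HilbertRep.Irreducible (R : HilbertRep A) : Prop :=
  ∀ S : Submodule ℂ R.H, IsClosed (S : Set R.H) →
    (∀ (a : A), ∀ x ∈ S, R.ρ a x ∈ S) → S = ⊥ ∨ S = ⊤

/-- Disjointness of two representations: the only bounded intertwiner is `0`. -/
def HilbertRep.Disjoint (R₁ R₂ : HilbertRep A) : Prop :=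
  ∀ T : R₁.H →L[ℂ] R₂.H, (∀ a : A, T ∘L R₁.ρ a = R₂.ρ a ∘L T) → T = 0

/-- A nonzero finite rank orthogonal projection on a Hilbert space. -/
def IsFinRankProj {H : Type*} [NormedAddCommGroup H] [InnerProductSpace ℂ H] [CompleteSpace H]
    (p : H →L[ℂ] H) : Prop :=
  IsSelfAdjoint p ∧ p * p = p ∧ p ≠ 0 ∧ FiniteDimensional ℂ (LinearMap.range p.toLinearMap)

/-- For a finite rank projection `p` and a bounded operator `S` on `H`, the number `Tr (p S)`:
the trace of `p S p` viewed as an endomorphism of the (finite dimensional) range of `p`. -/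
def trProj {H : Type*} [NormedAddCommGroup H] [InnerProductSpace ℂ H] [CompleteSpace H]
    (p S : H →L[ℂ] H) : ℂ :=
  LinearMap.trace ℂ (LinearMap.range p.toLinearMap)
    ((p ∘L S ∘L p).toLinearMap.restrict (fun x _ => ⟨S (p x), rfl⟩))

/-- The rank of a projection `p`, i.e. `Tr p`. -/
def rankProj {H : Type*} [NormedAddCommGroup H] [InnerProductSpace ℂ H] [CompleteSpace H]
    (p : H →L[ℂ] H) : ℕ :=
  Module.finrank ℂ (LinearMap.range p.toLinearMap)

/-- Simplicity of a C*-algebra: the only closed two-sided ideals are `0` and `A`. -/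
def IsSimpleCStar (A : Type*) [NonUnitalCStarAlgebra A] : Prop :=
  ∀ I : TwoSidedIdeal A, IsClosed (I : Set A) → I = ⊥ ∨ I = ⊤

/-- A trace `τ` is quasidiagonal (QD) if there is a sequence of c.c.p. maps `φ n : A → M_{k n}`
which is asymptotically multiplicative in norm and whose normalized traces recover `τ`. -/
def IsQDTrace (τ : A →L[ℂ] ℂ) : Prop :=
  ∃ (k : ℕ → ℕ) (φ : ∀ n : ℕ, A →ₗ[ℂ] MatAlg (k n)),
    (∀ n, 0 < k n) ∧ (∀ n, IsCCP (φ n)) ∧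
    (∀ a b : A, Tendsto (fun n => ‖φ n (a * b) - φ n a * φ n b‖) atTop (𝓝 0)) ∧
    (∀ a : A, Tendsto (fun n => normTr (φ n a)) atTop (𝓝 (τ a)))

/-- Inner quasidiagonality, in the Blackadar–Kirchberg characterization taken here as the
definition: there is a sequence of c.c.p. maps `φ n : A → M_{k n}` with `‖φ n a‖ → ‖a‖` and
`dist (a, A_{φ n}) → 0` for every `a ∈ A`. -/
def IsInnerQD (A : Type*) [NonUnitalCStarAlgebra A] : Prop :=
  ∃ (k : ℕ → ℕ) (φ : ∀ n : ℕ, A →ₗ[ℂ] MatAlg (k n)),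
    (∀ n, IsCCP (φ n)) ∧
    (∀ a : A, Tendsto (fun n => ‖φ n a‖) atTop (𝓝 ‖a‖)) ∧
    (∀ a : A, Tendsto (fun n => infDist a (MultDomain (φ n))) atTop (𝓝 0))

/-! ### Auxiliary lemmas -/

/-- Non-unital powers: `pwA y k = y^(k+1)`. -/
def pwA (y : A) : ℕ → A
  | 0 => y
  | (k+1) => y * pwA y k

lemma pwA_cfcn (y : A) (hy : IsSelfAdjoint y) (m : ℕ) :
    pwA y m = cfcₙ (fun t : ℝ => t ^ (m + 1)) y := by
  induction m with
  | zero => simp [pwA, cfcₙ_id' ℝ y]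
  | succ k ih =>
    have h1 : (fun t : ℝ => t ^ (k + 1 + 1)) = fun t : ℝ => t * t ^ (k + 1) := by
      ext t; ring
    rw [h1, cfcₙ_mul _ _ y, ← ih, pwA, cfcₙ_id' ℝ y]

lemma pwA_norm_le (y : A) (k : ℕ) : ‖pwA y k‖ ≤ ‖y‖ ^ (k + 1) := by
  induction k with
  | zero => simp [pwA]
  | succ k ih =>
    calc ‖pwA y (k+1)‖ ≤ ‖y‖ * ‖pwA y k‖ := norm_mul_le _ _
    _ ≤ ‖y‖ * ‖y‖ ^ (k+1) := mul_le_mul_of_nonneg_left ih (norm_nonneg y)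
    _ = ‖y‖ ^ (k+1+1) := by ring

lemma pwA_dist (d y : A) (K : ℝ) (hd : ‖d‖ ≤ K) (hy : ‖y‖ ≤ K) (k : ℕ) :
    ‖pwA d k - pwA y k‖ ≤ (k + 1) * K ^ k * ‖d - y‖ := by
  have hK : 0 ≤ K := le_trans (norm_nonneg y) hy
  induction k with
  | zero => simp [pwA]
  | succ k ih =>
    have key : pwA d (k+1) - pwA y (k+1) = d * (pwA d k - pwA y k) + (d - y) * pwA y k := by
      simp only [pwA, mul_sub, sub_mul]; abel
    calc ‖pwA d (k+1) - pwA y (k+1)‖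
        ≤ ‖d * (pwA d k - pwA y k)‖ + ‖(d - y) * pwA y k‖ := by rw [key]; exact norm_add_le _ _
      _ ≤ ‖d‖ * ‖pwA d k - pwA y k‖ + ‖d - y‖ * ‖pwA y k‖ := by
          gcongr <;> exact norm_mul_le _ _
      _ ≤ K * ((k + 1) * K ^ k * ‖d - y‖) + ‖d - y‖ * K ^ (k + 1) := by
          have h2 : ‖pwA y k‖ ≤ K ^ (k + 1) :=
            le_trans (pwA_norm_le y k) (pow_le_pow_left₀ (norm_nonneg y) hy _)
          gcongr
      _ = ((k:ℝ) + 2) * K ^ (k+1) * ‖d - y‖ := by ring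
      _ = ((k+1:ℕ) + 1) * K ^ (k+1) * ‖d - y‖ := by push_cast; ring

lemma abs_le_norm_of_mem_quasi {z : A} {t : ℝ} (ht : t ∈ quasispectrum ℝ z) : |t| ≤ ‖z‖ := by
  rw [Unitization.quasispectrum_eq_spectrum_inr' ℝ ℂ] at ht
  have := spectrum.norm_le_norm_of_mem ht
  rwa [Unitization.norm_inr, Real.norm_eq_abs] at this

lemma quasi_subset (a : A) : quasispectrum ℝ (a * star a) ⊆ Set.Icc 0 ‖a * star a‖ := by
  intro t ht
  refine ⟨?_, (Real.le_norm_self t).trans ?_⟩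
  · rw [Unitization.quasispectrum_eq_spectrum_inr' ℝ ℂ] at ht
    have h1 : ((a * star a : A) : Unitization ℂ A)
        = star ((star a : A) : Unitization ℂ A) * ((star a : A) : Unitization ℂ A) := by
      rw [← Unitization.inr_star, ← Unitization.inr_mul, star_star]
    rw [h1] at ht
    exact spectrum_star_mul_self_nonneg t ht
  · rw [Real.norm_eq_abs]; exact abs_le_norm_of_mem_quasi ht

lemma norm_mem_quasi (a : A) (h : a * star a ≠ 0) :
    ‖a * star a‖ ∈ quasispectrum ℝ (a * star a) := by
  have hsa : IsSelfAdjoint (a * star a) := by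
    rw [IsSelfAdjoint, star_mul, star_star]
  have hsa' : IsSelfAdjoint ((a * star a : A) : Unitization ℂ A) := hsa.inr ℂ
  rcases CStarAlgebra.norm_or_neg_norm_mem_spectrum (A := Unitization ℂ A) hsa' with h1 | h1
  · rw [Unitization.quasispectrum_eq_spectrum_inr' ℝ ℂ]
    rwa [Unitization.norm_inr] at h1
  · exfalso
    rw [Unitization.norm_inr] at h1
    have h2 : -‖a * star a‖ ∈ quasispectrum ℝ (a * star a) := by
      rwa [Unitization.quasispectrum_eq_spectrum_inr' ℝ ℂ]
    have h3 := (quasi_subset a h2).1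
    have h4 : ‖a * star a‖ ≤ 0 := by linarith
    exact h (norm_le_zero_iff.mp h4)

lemma tau_pow_lower (τ : A →L[ℂ] ℂ)
    (hpos : ∀ b : A, 0 ≤ τ (star b * b))
    (hfaithful : ∀ b : A, τ (star b * b) = 0 → b = 0)
    (a : A) {ε : ℝ} (hε : 0 < ε) (hεR : ε < ‖a * star a‖) :
    ∃ δ : ℝ, 0 < δ ∧ ∀ m : ℕ,
      (‖a * star a‖ - ε) ^ (m+1) * δ ≤ (τ (pwA (a * star a) m)).re := by
  set y := a * star a with hy
  set R := ‖y‖ with hR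
  have hsa : IsSelfAdjoint y := by rw [IsSelfAdjoint, hy, star_mul, star_star]
  have hy0 : y ≠ 0 := by
    intro h
    rw [h, norm_zero] at hR
    rw [hR] at hεR
    linarith
  have hRpos : 0 < R := lt_trans hε hεR
  have hRε : 0 ≤ R - ε := by linarith
  set f : ℝ → ℝ := fun t => min (max ((t - (R - ε))/ε) 0) 1 with hf_def
  have hf : Continuous f := by fun_prop
  have hf0 : f 0 = 0 := by
    have : (0 - (R - ε))/ε ≤ 0 := by
      apply div_nonpos_of_nonpos_of_nonneg <;> linarith
    simp only [hf_def]
    rw [max_eq_right this, min_eq_left (by norm_num)]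
  have hfR : f R = 1 := by
    have h1 : (R - (R - ε))/ε = 1 := by field_simp; ring
    simp only [hf_def, h1]
    norm_num
  have hf_nonneg : ∀ t, 0 ≤ f t := fun t => le_min (le_max_right _ _) (by norm_num)
  have hf_le_one : ∀ t, f t ≤ 1 := fun t => min_le_right _ _
  have hf_zero_of_le : ∀ t, t ≤ R - ε → f t = 0 := by
    intro t ht
    have : (t - (R - ε))/ε ≤ 0 := by
      apply div_nonpos_of_nonpos_of_nonneg <;> linarith
    simp only [hf_def]
    rw [max_eq_right this, min_eq_left (by norm_num)]
  set z : A := cfcₙ f y with hz_def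
  have hz_sa : IsSelfAdjoint z := cfcₙ_predicate f y
  have hz0 : z ≠ 0 := by
    intro h
    have h1 : (1 : ℝ) ∈ quasispectrum ℝ z := by
      rw [hz_def, cfcₙ_map_quasispectrum f y (by fun_prop) hf0 hsa]
      exact ⟨R, norm_mem_quasi a hy0, hfR⟩
    have := abs_le_norm_of_mem_quasi h1
    rw [h, norm_zero] at this
    norm_num at this
  have hτz := hpos z
  rw [Complex.le_def] at hτz
  set δ : ℝ := (τ (star z * z)).re with hδ_def
  have hδ0 : 0 ≤ δ := by simpa using hτz.1
  have hδpos : 0 < δ := by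
    rcases lt_or_eq_of_le hδ0 with h | h
    · exact h
    · exfalso
      apply hz0
      apply hfaithful
      apply Complex.ext
      · simpa using h.symm
      · simpa using hτz.2.symm
  refine ⟨δ, hδpos, fun m => ?_⟩
  set c : ℝ := (R - ε) ^ (m + 1) with hc_def
  have hc0 : 0 ≤ c := pow_nonneg hRε _
  set g : ℝ → ℝ := fun t => t ^ (m+1) - c • (f t * f t) with hg_def
  have hg : Continuous g := by fun_prop
  have hg0 : g 0 = 0 := by simp [hg_def, hf0]
  have hgnn : ∀ t ∈ quasispectrum ℝ y, 0 ≤ g t := by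
    intro t ht
    obtain ⟨ht0, htR⟩ := quasi_subset a ht
    by_cases hcase : t ≤ R - ε
    · simp [hg_def, hf_zero_of_le t hcase, pow_nonneg ht0]
    · push_neg at hcase
      have h1 : c * (f t * f t) ≤ c * 1 := by
        apply mul_le_mul_of_nonneg_left _ hc0
        calc f t * f t ≤ 1 * 1 :=
              mul_le_mul (hf_le_one t) (hf_le_one t) (hf_nonneg t) zero_le_one
        _ = 1 := by norm_num
      have h2 : c ≤ t ^ (m+1) := by
        rw [hc_def]
        exact pow_le_pow_left₀ hRε (le_of_lt hcase) _
      simp only [hg_def, smul_eq_mul]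
      linarith
  set x : A := cfcₙ (fun t => Real.sqrt (g t)) y with hx_def
  have hx_sa : IsSelfAdjoint x := cfcₙ_predicate _ y
  have hxx : star x * x = cfcₙ g y := by
    rw [hx_sa.star_eq, hx_def, ← cfcₙ_mul _ _ y (by fun_prop) (by simp [hg0])
      (by fun_prop) (by simp [hg0])]
    exact cfcₙ_congr (fun t ht => Real.mul_self_sqrt (hgnn t ht))
  have hsplit : cfcₙ g y = pwA y m - c • (star z * z) := by
    have e1 : cfcₙ g y
        = cfcₙ (fun t : ℝ => t^(m+1)) y - cfcₙ (fun t => c • (f t * f t)) y :=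
      cfcₙ_sub _ _ y (by fun_prop) (by simp) (by fun_prop) (by simp [hf0])
    have e2 : cfcₙ (fun t => c • (f t * f t)) y = c • cfcₙ (fun t => f t * f t) y :=
      cfcₙ_smul c _ y (by fun_prop) (by simp [hf0])
    have e3 : cfcₙ (fun t => f t * f t) y = z * z := by
      rw [hz_def]; exact cfcₙ_mul f f y (by fun_prop) hf0 (by fun_prop) hf0
    rw [e1, e2, e3, hz_sa.star_eq, pwA_cfcn y hsa m]
  have key : pwA y m = cfcₙ g y + c • (star z * z) := by
    rw [hsplit]; abel
  have hτ_eq : τ (pwA y m) = τ (cfcₙ g y) + (c : ℝ) • τ (star z * z) := by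
    rw [key, map_add, ContinuousLinearMap.map_smul_of_tower]
  have hx_pos := hpos x
  rw [Complex.le_def] at hx_pos
  have h1 : 0 ≤ (τ (cfcₙ g y)).re := by
    rw [← hxx]; simpa using hx_pos.1
  have h2 : (τ (pwA y m)).re = (τ (cfcₙ g y)).re + c * δ := by
    rw [hτ_eq]
    simp [Complex.add_re, Complex.smul_re, hδ_def]
  rw [h2, hc_def]
  nlinarith [pow_nonneg hRε (m+1)]

lemma euclid_coord_le (k : ℕ) (x : EuclideanSpace ℂ (Fin k)) (i : Fin k) :
    ‖x i‖ ≤ ‖x‖ := by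
  have h1 : (x i : ℂ) = inner ℂ (EuclideanSpace.single i (1:ℂ)) x := by
    rw [EuclideanSpace.inner_single_left]
    simp
  rw [h1]
  refine le_trans (norm_inner_le_norm _ _) ?_
  rw [EuclideanSpace.norm_single]
  simp

lemma abs_normTr_le {k : ℕ} (hk : 0 < k) (T : MatAlg k) : ‖normTr T‖ ≤ ‖T‖ := by
  have key : ‖LinearMap.trace ℂ (EuclideanSpace ℂ (Fin k)) T.toLinearMap‖
      ≤ k * ‖T‖ := by
    rw [LinearMap.trace_eq_matrix_trace ℂ (EuclideanSpace.basisFun (Fin k) ℂ).toBasis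
      T.toLinearMap, Matrix.trace]
    refine le_trans (norm_sum_le _ _) ?_
    have hb : ∀ i : Fin k, ‖(LinearMap.toMatrix
        (EuclideanSpace.basisFun (Fin k) ℂ).toBasis
        (EuclideanSpace.basisFun (Fin k) ℂ).toBasis T.toLinearMap).diag i‖ ≤ ‖T‖ := by
      intro i
      rw [Matrix.diag, LinearMap.toMatrix_apply]
      have h2 : ((EuclideanSpace.basisFun (Fin k) ℂ).toBasis.repr
          (T.toLinearMap ((EuclideanSpace.basisFun (Fin k) ℂ).toBasis i))) i
          = (T ((EuclideanSpace.basisFun (Fin k) ℂ) i)) i := rfl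
      rw [h2]
      refine le_trans (euclid_coord_le k _ i) ?_
      refine le_trans (T.le_opNorm _) ?_
      have : ‖(EuclideanSpace.basisFun (Fin k) ℂ) i‖ = 1 := by
        rw [EuclideanSpace.basisFun_apply, EuclideanSpace.norm_single]
        simp
      rw [this, mul_one]
    calc ∑ i, ‖(LinearMap.toMatrix (EuclideanSpace.basisFun (Fin k) ℂ).toBasis
          (EuclideanSpace.basisFun (Fin k) ℂ).toBasis T.toLinearMap).diag i‖
        ≤ ∑ _i : Fin k, ‖T‖ := Finset.sum_le_sum (fun i _ => hb i)
      _ = k * ‖T‖ := by rw [Finset.sum_const, Finset.card_univ, Fintype.card_fin, nsmul_eq_mul]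
  rw [normTr, norm_div]
  have hkpos : (0:ℝ) < ‖(k:ℂ)‖ := by
    rw [Complex.norm_natCast]; exact_mod_cast hk
  rw [div_le_iff₀ hkpos]
  calc ‖LinearMap.trace ℂ (EuclideanSpace ℂ (Fin k)) T.toLinearMap‖
      ≤ k * ‖T‖ := key
    _ = ‖T‖ * ‖(k:ℂ)‖ := by rw [Complex.norm_natCast]; ring

lemma normTr_sub {k : ℕ} (S T : MatAlg k) : normTr (S - T) = normTr S - normTr T := by
  simp [normTr, map_sub, sub_div]

lemma multDomain_nonempty' {H : Type*} [NormedAddCommGroup H] [InnerProductSpace ℂ H]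
    (φ : A →ₗ[ℂ] (H →L[ℂ] H)) : (MultDomain φ).Nonempty := by
  refine ⟨0, fun b => ?_⟩
  simp [MultDomain, map_zero]

lemma phi_pwA {k : ℕ} (φ : A →ₗ[ℂ] MatAlg k) {d : A} (hd : d ∈ MultDomain φ) (m : ℕ) :
    φ (pwA d m) = (φ d) ^ (m + 1) := by
  induction m with
  | zero => simp [pwA]
  | succ j ih =>
    rw [pwA, (hd (pwA d j)).1, ih, ← pow_succ']

lemma eventually_norm_phi_sq (τ : A →L[ℂ] ℂ)
    (hpos : ∀ b : A, 0 ≤ τ (star b * b))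
    (hfaithful : ∀ b : A, τ (star b * b) = 0 → b = 0)
    {k : ℕ → ℕ} (hk : ∀ n, 0 < k n) (φ : ∀ n : ℕ, A →ₗ[ℂ] MatAlg (k n))
    (hcontr : ∀ n (x : A), ‖φ n x‖ ≤ ‖x‖)
    (hdist : ∀ x : A, Tendsto (fun n => infDist x (MultDomain (φ n))) atTop (𝓝 0))
    (htr : ∀ x : A, Tendsto (fun n => normTr (φ n x)) atTop (𝓝 (τ x)))
    (a : A) (ha : a ≠ 0) {θ : ℝ} (hθ : 0 < θ) :
    ∀ᶠ n in atTop, ‖a * star a‖ - θ ≤ ‖φ n (a * star a)‖ := by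
  by_cases hθR : ‖a * star a‖ ≤ θ
  · exact Eventually.of_forall (fun n => le_trans (by linarith) (norm_nonneg _))
  push_neg at hθR
  set y := a * star a with hy
  set R := ‖y‖ with hR
  have hR0 : 0 < R := lt_trans hθ hθR
  obtain ⟨δ, hδ, hτpow⟩ := tau_pow_lower τ hpos hfaithful a
    (show (0:ℝ) < θ/4 by linarith) (show θ/4 < ‖a * star a‖ by rw [← hy, ← hR]; linarith)
  have hnum : 0 < R - θ/2 := by linarith
  have hden : 0 < R - θ/4 := by linarith
  set q : ℝ := (R - θ/2)/(R - θ/4) with hq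
  have hq1 : q < 1 := by rw [hq, div_lt_one hden]; linarith
  have hq0 : 0 ≤ q := le_of_lt (div_pos hnum hden)
  obtain ⟨m, hm⟩ := exists_pow_lt_of_lt_one (half_pos hδ) hq1
  have hqm : q ^ (m + 1) < δ/2 :=
    lt_of_le_of_lt (pow_le_pow_of_le_one hq0 (le_of_lt hq1) (Nat.le_succ m)) hm
  set L : ℝ := (δ/2) * (R - θ/4) ^ (m + 1) with hL
  have hL0 : 0 < L := by positivity
  have hLlt : (R - θ/2) ^ (m + 1) < L := by
    have h1 := hqm
    rw [hq, div_pow, div_lt_iff₀ (by positivity)] at h1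
    rw [hL]; linarith
  have h2L : 2 * L ≤ (τ (pwA y m)).re := by
    have := hτpow m
    rw [hL]
    rw [← hy, ← hR] at this
    linarith
  set K : ℝ := R + 1 with hK
  set B : ℝ := (m + 1) * K ^ m with hB
  have hB0 : 0 < B := by positivity
  set η : ℝ := min 1 (min (θ/2) (L/(2*B))) with hη
  have hη0 : 0 < η := lt_min one_pos (lt_min (by linarith) (by positivity))
  have hη1 : η ≤ 1 := min_le_left _ _
  have hηθ : η ≤ θ/2 := le_trans (min_le_right _ _) (min_le_left _ _)
  have hηL : η ≤ L/(2*B) := le_trans (min_le_right _ _) (min_le_right _ _)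
  have ev1 : ∀ᶠ n in atTop, infDist y (MultDomain (φ n)) < η :=
    (hdist y).eventually (gt_mem_nhds hη0)
  have ev2 : ∀ᶠ n in atTop, dist (normTr (φ n (pwA y m))) (τ (pwA y m)) < L/2 :=
    (htr (pwA y m)).eventually (Metric.ball_mem_nhds _ (by positivity))
  filter_upwards [ev1, ev2] with n h1 h2
  obtain ⟨d, hdMD, hdy⟩ := (infDist_lt_iff (multDomain_nonempty' (φ n))).mp h1
  have hdy' : ‖d - y‖ < η := by
    rw [dist_comm, dist_eq_norm] at hdy; exact hdy
  have hdn : ‖d‖ ≤ K := by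
    have := norm_sub_norm_le d y
    rw [hK]
    have hyR : ‖y‖ = R := rfl
    linarith [le_of_lt hdy', this]
  have hyn : ‖y‖ ≤ K := by rw [hK]; linarith [hR.symm.le]
  -- trace estimates
  have t0 : ‖normTr (φ n (pwA y m)) - τ (pwA y m)‖ < L/2 := by
    rwa [Complex.dist_eq] at h2
  have t1 : (τ (pwA y m)).re - L/2 ≤ ‖normTr (φ n (pwA y m))‖ := by
    have hh : ‖τ (pwA y m)‖
        ≤ ‖normTr (φ n (pwA y m))‖ + L/2 := by
      calc ‖τ (pwA y m)‖
          ≤ ‖normTr (φ n (pwA y m))‖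
            + ‖τ (pwA y m) - normTr (φ n (pwA y m))‖ := by
            have := norm_add_le (normTr (φ n (pwA y m)))
              (τ (pwA y m) - normTr (φ n (pwA y m)))
            simpa using this
        _ ≤ ‖normTr (φ n (pwA y m))‖ + L/2 := by
            rw [← norm_neg (τ (pwA y m) - normTr (φ n (pwA y m)))]
            simp only [neg_sub]
            linarith [le_of_lt t0]
    have hre : (τ (pwA y m)).re ≤ ‖τ (pwA y m)‖ := Complex.re_le_norm _
    linarith
  have t2 : ‖pwA d m - pwA y m‖ ≤ B * η := by
    calc ‖pwA d m - pwA y m‖ ≤ (m + 1) * K ^ m * ‖d - y‖ := pwA_dist d y K hdn hyn m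
    _ ≤ (m + 1) * K ^ m * η := by
        apply mul_le_mul_of_nonneg_left (le_of_lt hdy')
        positivity
    _ = B * η := by rw [hB]
  have t3 : B * η ≤ L/2 := by
    have : B * η ≤ B * (L/(2*B)) := mul_le_mul_of_nonneg_left hηL (le_of_lt hB0)
    calc B * η ≤ B * (L/(2*B)) := this
    _ = L/2 := by field_simp
  have t4 : ‖normTr (φ n (pwA d m)) - normTr (φ n (pwA y m))‖ ≤ L/2 := by
    rw [← normTr_sub, ← map_sub]
    calc ‖normTr (φ n (pwA d m - pwA y m))‖
        ≤ ‖φ n (pwA d m - pwA y m)‖ := abs_normTr_le (hk n) _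
      _ ≤ ‖pwA d m - pwA y m‖ := hcontr n _
      _ ≤ B * η := t2
      _ ≤ L/2 := t3
  have t5 : L ≤ ‖normTr (φ n (pwA d m))‖ := by
    have hh : ‖normTr (φ n (pwA y m))‖
        ≤ ‖normTr (φ n (pwA d m))‖ + L/2 := by
      calc ‖normTr (φ n (pwA y m))‖
          ≤ ‖normTr (φ n (pwA d m))‖
            + ‖normTr (φ n (pwA y m)) - normTr (φ n (pwA d m))‖ := by
            have := norm_add_le (normTr (φ n (pwA d m)))
              (normTr (φ n (pwA y m)) - normTr (φ n (pwA d m)))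
            simpa using this
        _ ≤ ‖normTr (φ n (pwA d m))‖ + L/2 := by
            rw [← norm_neg (normTr (φ n (pwA y m)) - normTr (φ n (pwA d m)))]
            simp only [neg_sub]
            linarith [t4]
    linarith [t1, h2L]
  have t6 : L ≤ ‖φ n d‖ ^ (m+1) := by
    calc L ≤ ‖normTr (φ n (pwA d m))‖ := t5
    _ ≤ ‖φ n (pwA d m)‖ := abs_normTr_le (hk n) _
    _ = ‖(φ n d) ^ (m+1)‖ := by rw [phi_pwA (φ n) hdMD m]
    _ ≤ ‖φ n d‖ ^ (m+1) := norm_pow_le' _ (Nat.succ_pos m)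
  have t7 : R - θ/2 < ‖φ n d‖ := by
    have hpow : (R - θ/2) ^ (m+1) < ‖φ n d‖ ^ (m+1) := lt_of_lt_of_le hLlt t6
    exact lt_of_pow_lt_pow_left₀ _ (norm_nonneg _) hpow
  have t8 : ‖φ n d‖ - ‖φ n y‖ ≤ η := by
    have h3 := norm_sub_norm_le (φ n d) (φ n y)
    have h4 : ‖φ n d - φ n y‖ ≤ ‖d - y‖ := by
      rw [← map_sub]; exact hcontr n _
    linarith [le_of_lt hdy']
  have : R - θ ≤ ‖φ n y‖ := by linarith
  exact this

lemma eventually_norm_phi (τ : A →L[ℂ] ℂ)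
    (hpos : ∀ b : A, 0 ≤ τ (star b * b))
    (hfaithful : ∀ b : A, τ (star b * b) = 0 → b = 0)
    {k : ℕ → ℕ} (hk : ∀ n, 0 < k n) (φ : ∀ n : ℕ, A →ₗ[ℂ] MatAlg (k n))
    (hcontr : ∀ n (x : A), ‖φ n x‖ ≤ ‖x‖)
    (hdist : ∀ x : A, Tendsto (fun n => infDist x (MultDomain (φ n))) atTop (𝓝 0))
    (htr : ∀ x : A, Tendsto (fun n => normTr (φ n x)) atTop (𝓝 (τ x)))
    (a : A) (ha : a ≠ 0) {θ : ℝ} (hθ : 0 < θ) :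
    ∀ᶠ n in atTop, ‖a‖ - θ ≤ ‖φ n a‖ := by
  set Na := ‖a‖ with hNa
  have hNa0 : 0 < Na := norm_pos_iff.mpr ha
  have hRN : ‖a * star a‖ = Na * Na := CStarRing.norm_self_mul_star
  set θ₁ : ℝ := Na * θ / 4 with hθ₁
  have hθ₁0 : 0 < θ₁ := by positivity
  set η : ℝ := min 1 (min (θ/4) (Na * θ/(4*(2*Na+1)))) with hη
  have hη0 : 0 < η := lt_min one_pos (lt_min (by linarith) (by positivity))
  have hη1 : η ≤ 1 := min_le_left _ _
  have hηθ : η ≤ θ/4 := le_trans (min_le_right _ _) (min_le_left _ _)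
  have hηN : η * (2*Na+1) ≤ Na * θ / 4 := by
    have h1 : η ≤ Na * θ/(4*(2*Na+1)) := le_trans (min_le_right _ _) (min_le_right _ _)
    have h2 : (0:ℝ) < 2*Na+1 := by linarith
    calc η * (2*Na+1) ≤ (Na * θ/(4*(2*Na+1))) * (2*Na+1) :=
          mul_le_mul_of_nonneg_right h1 (le_of_lt h2)
    _ = Na * θ / 4 := by field_simp
  have ev1 : ∀ᶠ n in atTop, infDist a (MultDomain (φ n)) < η :=
    (hdist a).eventually (gt_mem_nhds hη0)
  have ev2 := eventually_norm_phi_sq τ hpos hfaithful hk φ hcontr hdist htr a ha hθ₁0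
  filter_upwards [ev1, ev2] with n h1 h2
  obtain ⟨c, hcMD, hca⟩ := (infDist_lt_iff (multDomain_nonempty' (φ n))).mp h1
  have hca' : ‖c - a‖ < η := by rw [dist_comm, dist_eq_norm] at hca; exact hca
  have hcn : ‖c‖ ≤ Na + η := by
    have := norm_sub_norm_le c a
    linarith [le_of_lt hca']
  -- E1
  have E1 : ‖φ n c‖ - ‖φ n a‖ ≤ η := by
    have h3 := norm_sub_norm_le (φ n c) (φ n a)
    have h4 : ‖φ n c - φ n a‖ ≤ ‖c - a‖ := by rw [← map_sub]; exact hcontr n _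
    linarith [le_of_lt hca']
  -- products
  have hdiff : ‖c * star c - a * star a‖ ≤ η * (2*Na+1) := by
    have hsplit : c * star c - a * star a = c * (star c - star a) + (c - a) * star a := by
      rw [mul_sub, sub_mul]; abel
    have hstar : ‖star c - star a‖ = ‖c - a‖ := by
      rw [← star_sub, norm_star]
    calc ‖c * star c - a * star a‖
        ≤ ‖c * (star c - star a)‖ + ‖(c - a) * star a‖ := by
          rw [hsplit]; exact norm_add_le _ _
      _ ≤ ‖c‖ * ‖star c - star a‖ + ‖c - a‖ * ‖star a‖ := by
          gcongr <;> exact norm_mul_le _ _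
      _ ≤ (Na + η) * η + η * Na := by
          rw [hstar, norm_star]
          gcongr <;> first
            | exact hcn
            | exact le_of_lt hca'
            | positivity
      _ = η * (2*Na + η) := by ring
      _ ≤ η * (2*Na+1) := by
          apply mul_le_mul_of_nonneg_left _ (le_of_lt hη0)
          linarith
  have E2 : ‖a * star a‖ - θ₁ - η * (2*Na+1) ≤ ‖φ n c‖ * (Na + η) := by
    have hmul : ‖φ n (c * star c)‖ ≤ ‖φ n c‖ * (Na + η) := by
      rw [(hcMD (star c)).1]
      calc ‖φ n c * φ n (star c)‖ ≤ ‖φ n c‖ * ‖φ n (star c)‖ := norm_mul_le _ _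
      _ ≤ ‖φ n c‖ * (Na + η) := by
          apply mul_le_mul_of_nonneg_left _ (norm_nonneg _)
          calc ‖φ n (star c)‖ ≤ ‖star c‖ := hcontr n _
          _ = ‖c‖ := norm_star c
          _ ≤ Na + η := hcn
    have hclose : ‖φ n (a * star a)‖ - ‖φ n (c * star c)‖ ≤ η * (2*Na+1) := by
      have h3 := norm_sub_norm_le (φ n (a * star a)) (φ n (c * star c))
      have h4 : ‖φ n (a * star a) - φ n (c * star c)‖ ≤ ‖a * star a - c * star c‖ := by
        rw [← map_sub]; exact hcontr n _
      have h5 : ‖a * star a - c * star c‖ = ‖c * star c - a * star a‖ := norm_sub_rev _ _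
      linarith [hdiff]
    linarith [h2]
  -- conclude
  have E3 : Na - θ/2 - η ≤ ‖φ n c‖ := by
    have hnum : Na * (Na - θ/2) ≤ ‖φ n c‖ * (Na + η) := by
      rw [hRN] at E2
      nlinarith [hηN, hθ₁0]
    by_contra hcon
    push_neg at hcon
    have : ‖φ n c‖ * (Na + η) < (Na - θ/2 - η) * (Na + η) := by
      apply mul_lt_mul_of_pos_right hcon
      linarith
    nlinarith
  have : Na - θ ≤ ‖φ n a‖ := by linarith [E1, E3, hηθ]
  exact this

/-- A separable C*-algebra with a faithful locally finite dimensional tracial state is inner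
quasidiagonal (in the Blackadar–Kirchberg characterization). -/
theorem isInnerQD_of_faithful_lfdTrace
    {A : Type*} [NonUnitalCStarAlgebra A] [TopologicalSpace.SeparableSpace A]
    (τ : A →L[ℂ] ℂ) (hτ : IsTracialState τ) (hLFD : IsLFDTrace τ)
    (hfaithful : ∀ a : A, τ (star a * a) = 0 → a = 0) :
    IsInnerQD A := by
  obtain ⟨k, φ, hk, hccp, hdist, htr⟩ := hLFD
  have hcontr : ∀ n (x : A), ‖φ n x‖ ≤ ‖x‖ := fun n => (hccp n).2
  refine ⟨k, φ, hccp, ?_, hdist⟩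
  intro a
  by_cases ha : a = 0
  · subst ha
    simp only [map_zero, norm_zero]
    exact tendsto_const_nhds
  · rw [Metric.tendsto_atTop]
    intro ε hε
    have hup : ∀ n, ‖φ n a‖ ≤ ‖a‖ := fun n => hcontr n a
    have hlo := eventually_norm_phi τ hτ.2.1 hfaithful hk φ hcontr hdist htr a ha (half_pos hε)
    obtain ⟨N, hN⟩ := eventually_atTop.mp hlo
    refine ⟨N, fun n hn => ?_⟩
    have h1 := hN n hn
    rw [Real.dist_eq, abs_lt]
    constructor
    · linarith
    · linarith [hup n]
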